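/- There exists a constant k₁ > 0 such that for every integer m ≥ 1 there exists an acyclic directed multigraph D with exactly m arcs and mac(D) ≤ m/4 + k₁·m^{3/4}. -/

import Mathlib

open scoped BigOperators Classical

open Finset

namespace Scratch


def ww (d i j : ℕ) : ℕ := if i < j then i + d + 1 - j else 0

def A (d : ℕ) : ℕ := ∑ k ∈ range d, (k+1)

def col (d n : ℕ) : ℕ := ∑ i ∈ range n, ww d i n

def F (d n : ℕ) : ℕ := ∑ i ∈ range n, ∑ j ∈ range n, ww d i j

lemma ww_le (d i j : ℕ) : ww d i j ≤ d := by
  unfold ww; split <;> omega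

lemma ww_eq_zero (d i j : ℕ) (h : ¬ (i < j ∧ j ≤ i + d)) : ww d i j = 0 := by
  unfold ww; split <;> omega

lemma A_le (d : ℕ) : A d ≤ d * d := by
  unfold A
  calc ∑ k ∈ range d, (k+1) ≤ ∑ k ∈ range d, d := by
        apply Finset.sum_le_sum; intro k hk; simp at hk; omega
    _ = d * d := by simp [mul_comm]

lemma two_A (d : ℕ) : 2 * A d = d * (d+1) := by
  unfold A
  have h : ∑ i ∈ range (d+1), i = ∑ k ∈ range d, (k+1) := by
    rw [Finset.sum_range_succ']; simp
  have h2 := Finset.sum_range_id_mul_two (d+1)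
  simp only [Nat.add_sub_cancel] at h2
  have h3 : (d+1)*d = d*(d+1) := Nat.mul_comm _ _
  omega

lemma sum_Ico_ww (d i : ℕ) (hi : d ≤ i) : ∑ j ∈ Ico (i - d) i, ww d j i = A d := by
  rw [Finset.sum_Ico_eq_sum_range]
  have hcard : i - (i - d) = d := by omega
  rw [hcard]
  apply Finset.sum_congr rfl
  intro k hk
  simp only [mem_range] at hk
  unfold ww
  rw [if_pos (by omega)]
  omega

lemma out_le_A (d n i : ℕ) : ∑ j ∈ range n, ww d i j ≤ A d := by
  have h1 : ∑ j ∈ range n, ww d i j = ∑ j ∈ (range n).filter (fun j => i < j ∧ j ≤ i + d), ww d i j := by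
    rw [Finset.sum_filter_of_ne]
    intro j _ hj
    by_contra hc
    exact hj (ww_eq_zero d i j hc)
  rw [h1]
  have h2 : (range n).filter (fun j => i < j ∧ j ≤ i + d) ⊆ Ico (i+1) (i+d+1) := by
    intro j hj; simp only [mem_filter, mem_range, mem_Ico] at *; omega
  calc ∑ j ∈ (range n).filter (fun j => i < j ∧ j ≤ i + d), ww d i j
      ≤ ∑ j ∈ Ico (i+1) (i+d+1), ww d i j := Finset.sum_le_sum_of_subset h2
    _ = ∑ k ∈ range d, ww d i (i+1+k) := by
        have hc : i+d+1 - (i+1) = d := by omega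
        rw [Finset.sum_Ico_eq_sum_range, hc]
    _ = ∑ k ∈ range d, (d - k) := by
        apply Finset.sum_congr rfl; intro k hk; unfold ww; rw [if_pos (by omega)]; omega
    _ = ∑ k ∈ range d, (k+1) := by
        rw [← Finset.sum_range_reflect]
        apply Finset.sum_congr rfl; intro k hk; simp only [mem_range] at hk; omega
    _ = A d := rfl

lemma inn_ge_A (d n i : ℕ) (hd : d ≤ i) (hi : i ≤ n) : A d ≤ ∑ j ∈ range n, ww d j i := by
  rw [← sum_Ico_ww d i hd]
  apply Finset.sum_le_sum_of_subset
  intro j hj; simp only [mem_Ico, mem_range] at *; omega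

lemma col_eq_A (d n : ℕ) (hn : d ≤ n) : col d n = A d := by
  unfold col
  rw [← sum_Ico_ww d n hn]
  symm
  apply Finset.sum_subset
  · intro j hj; simp only [mem_Ico, mem_range] at *; omega
  · intro j hj hj2
    apply ww_eq_zero
    simp only [mem_Ico, mem_range] at *
    omega

lemma F_succ (d n : ℕ) : F d (n+1) = F d n + col d n := by
  unfold F col
  rw [Finset.sum_range_succ]
  have h1 : ∑ j ∈ range (n+1), ww d n j = 0 := by
    apply Finset.sum_eq_zero
    intro j hj; simp only [mem_range] at hj
    apply ww_eq_zero; omega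
  rw [h1, add_zero]
  rw [← Finset.sum_add_distrib]
  apply Finset.sum_congr rfl
  intro i _
  rw [Finset.sum_range_succ]

lemma F_mono (d : ℕ) : Monotone (F d) := by
  apply monotone_nat_of_le_succ
  intro n; rw [F_succ]; omega

lemma F_ge (d n : ℕ) (hn : d ≤ n) : (n - d) * A d ≤ F d n := by
  induction n, hn using Nat.le_induction with
  | base => simp
  | succ k hk ih =>
    rw [F_succ, col_eq_A d k hk]
    have h1 : k + 1 - d = (k - d) + 1 := by omega
    rw [h1, add_mul, one_mul]
    omega


lemma Qbound (d n : ℕ) (x : ℕ → ℤ) (hx : ∀ i, x i = 0 ∨ x i = 1) :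
    -(((d:ℤ)+1) * n) ≤
      2 * ∑ i ∈ range n, ∑ j ∈ range n, (ww d i j : ℤ) * ((1-2*x i) * (1-2*x j)) := by
  set c : ℕ → ℕ → ℤ := fun s i => if i ≤ s ∧ s ≤ i + d then 1 else 0 with hc
  have key : ∀ i ∈ range n, ∀ j ∈ range n,
      (∑ s ∈ range (n+d), c s i * c s j)
        = (ww d i j : ℤ) + (ww d j i : ℤ) + (if i = j then (d:ℤ)+1 else 0) := by
    intro i hi j hj
    simp only [mem_range] at hi hj
    have h1 : ∀ s ∈ range (n+d), c s i * c s j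
        = if (i ≤ s ∧ s ≤ i + d) ∧ (j ≤ s ∧ s ≤ j + d) then (1:ℤ) else 0 := by
      intro s _
      simp only [hc]
      by_cases p : i ≤ s ∧ s ≤ i + d <;> by_cases q : j ≤ s ∧ s ≤ j + d <;>
        simp [p, q]
    rw [Finset.sum_congr rfl h1, Finset.sum_boole]
    have h2 : (range (n+d)).filter (fun s => (i ≤ s ∧ s ≤ i + d) ∧ (j ≤ s ∧ s ≤ j + d))
        = Icc (max i j) (min (i+d) (j+d)) := by
      ext s
      simp only [mem_filter, mem_range, mem_Icc]
      omega
    rw [h2, Nat.card_Icc]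
    simp only [ww]
    split_ifs <;> omega
  have expand : ∑ s ∈ range (n+d), (∑ i ∈ range n, c s i * (1-2*x i))^2
      = ∑ i ∈ range n, ∑ j ∈ range n,
          (∑ s ∈ range (n+d), c s i * c s j) * ((1-2*x i)*(1-2*x j)) := by
    have e1 : ∀ s, (∑ i ∈ range n, c s i * (1-2*x i))^2
        = ∑ i ∈ range n, ∑ j ∈ range n, (c s i * c s j) * ((1-2*x i)*(1-2*x j)) := by
      intro s
      rw [sq, Finset.sum_mul_sum]
      apply Finset.sum_congr rfl; intro i _
      apply Finset.sum_congr rfl; intro j _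
      ring
    rw [Finset.sum_congr rfl (fun s _ => e1 s), Finset.sum_comm]
    apply Finset.sum_congr rfl; intro i _
    rw [Finset.sum_comm]
    apply Finset.sum_congr rfl; intro j _
    rw [Finset.sum_mul]
  have pos : (0:ℤ) ≤ ∑ s ∈ range (n+d), (∑ i ∈ range n, c s i * (1-2*x i))^2 :=
    Finset.sum_nonneg fun s _ => sq_nonneg _
  rw [expand, Finset.sum_congr rfl (fun i hi => Finset.sum_congr rfl
    (fun j hj => by rw [key i hi j hj]))] at pos
  have split : ∑ i ∈ range n, ∑ j ∈ range n,
      ((ww d i j : ℤ) + (ww d j i : ℤ) + (if i = j then (d:ℤ)+1 else 0)) * ((1-2*x i)*(1-2*x j))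
      = (∑ i ∈ range n, ∑ j ∈ range n, (ww d i j : ℤ) * ((1-2*x i)*(1-2*x j)))
        + (∑ i ∈ range n, ∑ j ∈ range n, (ww d j i : ℤ) * ((1-2*x i)*(1-2*x j)))
        + (∑ i ∈ range n, ∑ j ∈ range n, (if i = j then (d:ℤ)+1 else 0) * ((1-2*x i)*(1-2*x j))) := by
    rw [← Finset.sum_add_distrib, ← Finset.sum_add_distrib]
    apply Finset.sum_congr rfl; intro i _
    rw [← Finset.sum_add_distrib, ← Finset.sum_add_distrib]
    apply Finset.sum_congr rfl; intro j _
    ring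
  rw [split] at pos
  have sym : (∑ i ∈ range n, ∑ j ∈ range n, (ww d j i : ℤ) * ((1-2*x i)*(1-2*x j)))
      = ∑ i ∈ range n, ∑ j ∈ range n, (ww d i j : ℤ) * ((1-2*x i)*(1-2*x j)) := by
    rw [Finset.sum_comm]
    apply Finset.sum_congr rfl; intro i _
    apply Finset.sum_congr rfl; intro j _
    ring
  have diag : (∑ i ∈ range n, ∑ j ∈ range n, (if i = j then (d:ℤ)+1 else 0) * ((1-2*x i)*(1-2*x j)))
      = ((d:ℤ)+1) * n := by
    have e1 : ∀ i ∈ range n, (∑ j ∈ range n, (if i = j then (d:ℤ)+1 else 0) * ((1-2*x i)*(1-2*x j)))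
        = ((d:ℤ)+1) := by
      intro i hi
      rw [Finset.sum_eq_single_of_mem i hi]
      · rw [if_pos rfl]
        rcases hx i with h | h <;> rw [h] <;> ring
      · intro j _ hne
        rw [if_neg (Ne.symm hne), zero_mul]
    rw [Finset.sum_congr rfl e1, Finset.sum_const, card_range, nsmul_eq_mul]
    ring
  rw [sym, diag] at pos
  linarith

lemma Lbound (d n : ℕ) (x : ℕ → ℤ) (hx : ∀ i, x i = 0 ∨ x i = 1) :
    ∑ i ∈ range n, ∑ j ∈ range n, (ww d i j : ℤ) * (x i - x j) ≤ (d:ℤ)*d*d := by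
  have e1 : ∑ i ∈ range n, ∑ j ∈ range n, (ww d i j : ℤ) * (x i - x j)
      = (∑ i ∈ range n, (∑ j ∈ range n, (ww d i j : ℤ)) * x i)
        - (∑ j ∈ range n, (∑ i ∈ range n, (ww d i j : ℤ)) * x j) := by
    simp only [mul_sub, Finset.sum_sub_distrib]
    congr 1
    · apply Finset.sum_congr rfl; intro i _
      rw [Finset.sum_mul]
    · rw [Finset.sum_comm]
      apply Finset.sum_congr rfl; intro j _
      rw [Finset.sum_mul]
  rw [e1]
  have e2 : (∑ i ∈ range n, (∑ j ∈ range n, (ww d i j : ℤ)) * x i)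
        - (∑ j ∈ range n, (∑ i ∈ range n, (ww d i j : ℤ)) * x j)
      = ∑ i ∈ range n, ((∑ j ∈ range n, (ww d i j : ℤ)) * x i
          - (∑ j ∈ range n, (ww d j i : ℤ)) * x i) := by
    rw [Finset.sum_sub_distrib]
  rw [e2]
  have perb : ∀ i ∈ range n, ((∑ j ∈ range n, (ww d i j : ℤ)) * x i
      - (∑ j ∈ range n, (ww d j i : ℤ)) * x i) ≤ (if i < d then (d:ℤ)*d else 0) := by
    intro i hi
    simp only [mem_range] at hi
    have hO : (∑ j ∈ range n, (ww d i j : ℤ)) ≤ (d:ℤ)*d := by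
      have h1 := out_le_A d n i
      have h2 := A_le d
      have : ((∑ j ∈ range n, ww d i j : ℕ) : ℤ) ≤ ((d*d : ℕ) : ℤ) := by
        exact_mod_cast le_trans h1 h2
      push_cast at this
      convert this using 2
    have hOnn : (0:ℤ) ≤ ∑ j ∈ range n, (ww d i j : ℤ) :=
      Finset.sum_nonneg fun j _ => Int.natCast_nonneg _
    have hInn : (0:ℤ) ≤ ∑ j ∈ range n, (ww d j i : ℤ) :=
      Finset.sum_nonneg fun j _ => Int.natCast_nonneg _
    by_cases hid : i < d
    · rw [if_pos hid]
      rcases hx i with h | h <;> rw [h]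
      · simp
        positivity
      · simp only [mul_one]
        linarith
    · rw [if_neg hid]
      have hOI : (∑ j ∈ range n, (ww d i j : ℤ)) ≤ ∑ j ∈ range n, (ww d j i : ℤ) := by
        have h1 := out_le_A d n i
        have h2 := inn_ge_A d n i (by omega) (by omega)
        have : ((∑ j ∈ range n, ww d i j : ℕ) : ℤ) ≤ ((∑ j ∈ range n, ww d j i : ℕ) : ℤ) := by
          exact_mod_cast le_trans h1 h2
        push_cast at this
        exact this
      rcases hx i with h | h <;> rw [h] <;> simp <;> linarith
  calc ∑ i ∈ range n, ((∑ j ∈ range n, (ww d i j : ℤ)) * x i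
          - (∑ j ∈ range n, (ww d j i : ℤ)) * x i)
      ≤ ∑ i ∈ range n, (if i < d then (d:ℤ)*d else 0) := Finset.sum_le_sum perb
    _ ≤ (d:ℤ)*d*d := by
        rw [Finset.sum_ite, Finset.sum_const, Finset.sum_const_zero, add_zero, nsmul_eq_mul]
        have hcard : ((range n).filter (fun i => i < d)).card ≤ d := by
          have : (range n).filter (fun i => i < d) ⊆ range d := by
            intro k hk; simp only [mem_filter, mem_range] at *; omega
          calc _ ≤ (range d).card := Finset.card_le_card this
            _ = d := card_range d
        have : (((range n).filter (fun i => i < d)).card : ℤ) ≤ (d:ℤ) := by exact_mod_cast hcard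
        nlinarith [sq_nonneg ((d:ℤ))]

lemma cut_le (d n : ℕ) (x : ℕ → ℤ) (hx : ∀ i, x i = 0 ∨ x i = 1) :
    8 * ∑ i ∈ range n, ∑ j ∈ range n, (ww d i j : ℤ) * (x i * (1 - x j))
      ≤ 2 * (F d n : ℤ) + ((d:ℤ)+1)*n + 4*((d:ℤ)*d*d) := by
  have pt : ∀ i j : ℕ, 8 * ((ww d i j : ℤ) * (x i * (1 - x j)))
      = 2*(ww d i j : ℤ) - 2*((ww d i j : ℤ)*((1-2*x i)*(1-2*x j)))
        + 4*((ww d i j : ℤ)*(x i - x j)) := by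
    intro i j; ring
  have e1 : 8 * ∑ i ∈ range n, ∑ j ∈ range n, (ww d i j : ℤ) * (x i * (1 - x j))
      = 2 * (∑ i ∈ range n, ∑ j ∈ range n, (ww d i j : ℤ))
        - 2 * (∑ i ∈ range n, ∑ j ∈ range n, (ww d i j : ℤ)*((1-2*x i)*(1-2*x j)))
        + 4 * (∑ i ∈ range n, ∑ j ∈ range n, (ww d i j : ℤ)*(x i - x j)) := by
    simp only [Finset.mul_sum, ← Finset.sum_sub_distrib, ← Finset.sum_add_distrib]
    apply Finset.sum_congr rfl; intro i _
    apply Finset.sum_congr rfl; intro j _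
    ring
  have eF : (∑ i ∈ range n, ∑ j ∈ range n, (ww d i j : ℤ)) = (F d n : ℤ) := by
    unfold F
    push_cast
    rfl
  have hQ := Qbound d n x hx
  have hL := Lbound d n x hx
  rw [e1, eF]
  linarith

lemma F_le_cube (d n0 : ℕ) : F d n0 ≤ n0 * n0 * d := by
  unfold F
  calc ∑ i ∈ range n0, ∑ j ∈ range n0, ww d i j
      ≤ ∑ i ∈ range n0, ∑ j ∈ range n0, d :=
        Finset.sum_le_sum fun i _ => Finset.sum_le_sum fun j _ => ww_le d i j
    _ = n0 * n0 * d := by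
        simp [Finset.sum_const, card_range, mul_assoc]

lemma A_pos (d : ℕ) (hd : 1 ≤ d) : 1 ≤ A d := by
  have h := two_A d
  have h2 : 2 ≤ d * (d+1) := by
    calc 2 = 1 * 2 := by norm_num
      _ ≤ d * (d+1) := Nat.mul_le_mul hd (by omega)
  omega

lemma exists_n (d m : ℕ) (hd : 1 ≤ d) (hm : d*d*d*d ≤ m) :
    ∃ n : ℕ, d ≤ n ∧ F d n ≤ m ∧ m < F d n + A d := by
  have hP : ∃ k, m < F d (k+1) := by
    refine ⟨d + m, ?_⟩
    have h1 := F_ge d (d+m+1) (by omega)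
    have h2 : (d+m+1-d) = m+1 := by omega
    rw [h2] at h1
    have h3 : m + 1 ≤ (m+1) * A d := Nat.le_mul_of_pos_right _ (A_pos d hd)
    omega
  classical
  set n := Nat.find hP with hn_def
  have h1 : m < F d (n+1) := Nat.find_spec hP
  have h2 : F d n ≤ m := by
    rcases Nat.eq_zero_or_pos n with h | h
    · rw [h]; simp [F]
    · have h3 := Nat.find_min hP (show n - 1 < n by omega)
      have he : n - 1 + 1 = n := by omega
      rw [he] at h3; omega
  have h3 : d ≤ n := by
    by_contra hc
    push_neg at hc
    have h4 : F d (n+1) ≤ F d d := F_mono d (by omega)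
    have h5 : F d d ≤ d*d*d := F_le_cube d d
    have h6 : d*d*d ≤ d*d*d*d := by nlinarith
    omega
  refine ⟨n, h3, h2, ?_⟩
  rw [F_succ, col_eq_A d n h3] at h1
  exact h1

end Scratch

noncomputable section

namespace PaperStmt

variable {V : Type*} [Fintype V]

/-- Number of arcs of a directed multigraph given by a multiplicity function. -/
def totalMult (μ : V → V → ℕ) : ℕ := ∑ u, ∑ v, μ u v

/-- Maximum size of a directed cut of a directed multigraph. -/
def macMult (μ : V → V → ℕ) : ℕ :=
  Finset.univ.sup (fun X : Finset V => ∑ x ∈ X, ∑ y ∈ Xᶜ, μ x y)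

/-- A directed multigraph is acyclic if it has no directed cycle. -/
def AcyclicMult (μ : V → V → ℕ) : Prop :=
  ¬ ∃ (t : ℕ) (f : ℕ → V), 1 ≤ t ∧ f t = f 0 ∧ ∀ i < t, 0 < μ (f i) (f (i + 1))

open Scratch

theorem acyclic_multigraph_upper_bound :
    ∃ k₁ : ℝ, 0 < k₁ ∧ ∀ m : ℕ, 1 ≤ m →
      ∃ (n : ℕ) (μ : Fin n → Fin n → ℕ), 0 < n ∧ (∀ v, μ v v = 0) ∧
        AcyclicMult μ ∧ totalMult μ = m ∧
        (macMult μ : ℝ) ≤ (m : ℝ) / 4 + k₁ * (m : ℝ) ^ ((3 : ℝ) / 4) := by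
  refine ⟨4, by norm_num, ?_⟩
  intro m hm
  set d := Nat.sqrt (Nat.sqrt m) with hd_def
  have hd1 : 1 ≤ d := by
    rw [hd_def]
    have : 0 < Nat.sqrt m := Nat.sqrt_pos.mpr (by omega)
    exact Nat.sqrt_pos.mpr this
  have hd4 : d*d*d*d ≤ m := by
    have h1 : d * d ≤ Nat.sqrt m := Nat.sqrt_le (Nat.sqrt m)
    calc d*d*d*d = (d*d)*(d*d) := by ring
      _ ≤ Nat.sqrt m * Nat.sqrt m := Nat.mul_le_mul h1 h1
      _ ≤ m := Nat.sqrt_le m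
  have hub : m < ((d+1)*(d+1))*((d+1)*(d+1)) := by
    have h1 : Nat.sqrt m < (d+1)*(d+1) := Nat.lt_succ_sqrt (Nat.sqrt m)
    have h2 : m < (Nat.sqrt m + 1) * (Nat.sqrt m + 1) := Nat.lt_succ_sqrt m
    calc m < (Nat.sqrt m + 1) * (Nat.sqrt m + 1) := h2
      _ ≤ ((d+1)*(d+1))*((d+1)*(d+1)) := Nat.mul_le_mul (by omega) (by omega)
  obtain ⟨n, hdn, hFm, hmF⟩ := exists_n d m hd1 hd4
  set r := m - F d n with hr_def
  have hrA : r < A d := by omega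
  have hn1 : 1 ≤ n := le_trans hd1 hdn
  set N := n + 1 with hN_def
  set μ : Fin N → Fin N → ℕ := fun i j =>
    (if (j:ℕ) < n then ww d (i:ℕ) (j:ℕ) else 0)
      + (if (i:ℕ) = 0 ∧ (j:ℕ) = n then r else 0) with hμ_def
  have hfwd : ∀ i j : Fin N, μ i j ≠ 0 → (i:ℕ) < (j:ℕ) := by
    intro i j h
    by_contra hc
    push_neg at hc
    apply h
    have h1 : ww d (i:ℕ) (j:ℕ) = 0 := ww_eq_zero _ _ _ (by omega)
    simp only [hμ_def, h1, ite_self, zero_add]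
    rw [if_neg]
    rintro ⟨h2, h3⟩
    omega
  refine ⟨N, μ, by omega, ?_, ?_, ?_, ?_⟩
  · -- no self loops
    intro v
    by_contra h
    exact absurd (hfwd v v h) (lt_irrefl _)
  · -- acyclic
    rintro ⟨t, f, ht, hft, hcyc⟩
    have step : ∀ i < t, ((f i : ℕ)) < (f (i+1) : ℕ) :=
      fun i hi => hfwd _ _ (hcyc i hi).ne'
    have key : ∀ i ≤ t, (f 0 : ℕ) + i ≤ (f i : ℕ) := by
      intro i hi
      induction i with
      | zero => simp
      | succ k ih =>
        have h1 := ih (by omega)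
        have h2 := step k (by omega)
        omega
    have h1 := key t le_rfl
    rw [hft] at h1
    omega
  · -- total multiplicity
    unfold totalMult
    have conv1 : ∑ u : Fin N, ∑ v : Fin N, μ u v
        = ∑ i ∈ range N, ∑ j ∈ range N,
            ((if j < n then ww d i j else 0) + (if i = 0 ∧ j = n then r else 0)) := by
      rw [← Fin.sum_univ_eq_sum_range (fun i => ∑ j ∈ range N,
        ((if j < n then ww d i j else 0) + (if i = 0 ∧ j = n then r else 0))) N]
      apply Finset.sum_congr rfl
      intro u _
      rw [← Fin.sum_univ_eq_sum_range (fun j =>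
        (if j < n then ww d (u:ℕ) j else 0) + (if (u:ℕ) = 0 ∧ j = n then r else 0)) N]
    rw [conv1]
    have split : ∑ i ∈ range N, ∑ j ∈ range N,
        ((if j < n then ww d i j else 0) + (if i = 0 ∧ j = n then r else 0))
        = (∑ i ∈ range N, ∑ j ∈ range N, (if j < n then ww d i j else 0))
          + (∑ i ∈ range N, ∑ j ∈ range N, (if i = 0 ∧ j = n then r else 0)) := by
      simp only [Finset.sum_add_distrib]
    rw [split]
    have part1 : (∑ i ∈ range N, ∑ j ∈ range N, (if j < n then ww d i j else 0)) = F d n := by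
      have inner : ∀ i : ℕ, ∑ j ∈ range N, (if j < n then ww d i j else 0)
          = ∑ j ∈ range n, ww d i j := by
        intro i
        rw [hN_def, Finset.sum_range_succ, if_neg (lt_irrefl n), add_zero]
        apply Finset.sum_congr rfl
        intro j hj
        rw [if_pos (mem_range.mp hj)]
      rw [Finset.sum_congr rfl (fun i _ => inner i), hN_def, Finset.sum_range_succ]
      have last : ∑ j ∈ range n, ww d n j = 0 :=
        Finset.sum_eq_zero fun j hj => ww_eq_zero _ _ _ (by simp only [mem_range] at hj; omega)
      rw [last, add_zero]
      rfl
    have part2 : (∑ i ∈ range N, ∑ j ∈ range N, (if i = 0 ∧ j = n then r else 0)) = r := by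
      have inner : ∀ i ∈ range N, (∑ j ∈ range N, (if i = 0 ∧ j = n then r else 0))
          = if i = 0 then r else 0 := by
        intro i _
        by_cases h : i = 0
        · subst h
          simp only [true_and]
          rw [Finset.sum_ite_eq' (range N) n (fun _ => r)]
          simp [hN_def]
        · simp [h]
      rw [Finset.sum_congr rfl inner, Finset.sum_ite_eq' (range N) 0 (fun _ => r)]
      simp
    rw [part1, part2]
    omega
  · -- bound
    obtain ⟨X, -, hX⟩ := Finset.exists_mem_eq_sup (Finset.univ : Finset (Finset (Fin N)))
      ⟨∅, Finset.mem_univ ∅⟩ (fun X : Finset (Fin N) => ∑ x ∈ X, ∑ y ∈ Xᶜ, μ x y)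
    set x : ℕ → ℤ := fun i =>
      if h : i < N then (if (⟨i, h⟩ : Fin N) ∈ X then (1:ℤ) else 0) else 0 with hx_def
    have hx : ∀ i, x i = 0 ∨ x i = 1 := by
      intro i; rw [hx_def]; dsimp only; split_ifs <;> simp
    have hxu : ∀ u : Fin N, x (u:ℕ) = if u ∈ X then (1:ℤ) else 0 := by
      intro u; rw [hx_def]; dsimp only; rw [dif_pos u.isLt]
    have cutZ : ((∑ u ∈ X, ∑ v ∈ Xᶜ, μ u v : ℕ) : ℤ)
        = ∑ u : Fin N, ∑ v : Fin N, (μ u v : ℤ) * (x (u:ℕ) * (1 - x (v:ℕ))) := by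
      push_cast
      have e1 : ∀ u v : Fin N, (μ u v : ℤ) * (x (u:ℕ) * (1 - x (v:ℕ)))
          = if u ∈ X then (if v ∈ Xᶜ then (μ u v : ℤ) else 0) else 0 := by
        intro u v
        rw [hxu u, hxu v]
        by_cases hu : u ∈ X <;> by_cases hv : v ∈ X <;>
          simp [hu, hv, Finset.mem_compl]
      have e2 : ∀ u : Fin N, (∑ v : Fin N, if u ∈ X then (if v ∈ Xᶜ then (μ u v : ℤ) else 0) else 0)
          = if u ∈ X then (∑ v ∈ Xᶜ, (μ u v : ℤ)) else 0 := by
        intro u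
        by_cases hu : u ∈ X
        · simp only [hu, if_true]
          rw [Finset.sum_ite_mem Finset.univ Xᶜ, Finset.univ_inter]
        · simp [hu]
      symm
      rw [Finset.sum_congr rfl (fun u _ => Finset.sum_congr rfl (fun v _ => e1 u v))]
      rw [Finset.sum_congr rfl (fun u _ => e2 u)]
      rw [Finset.sum_ite_mem Finset.univ X, Finset.univ_inter]
    have e3 : (∑ u : Fin N, ∑ v : Fin N, (μ u v : ℤ) * (x (u:ℕ) * (1 - x (v:ℕ))))
        = ∑ i ∈ range N, ∑ j ∈ range N,
            (((if j < n then ww d i j else 0) : ℕ) + ((if i = 0 ∧ j = n then r else 0) : ℕ) : ℤ)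
              * (x i * (1 - x j)) := by
      rw [← Fin.sum_univ_eq_sum_range (fun i => ∑ j ∈ range N,
        ((((if j < n then ww d i j else 0) : ℕ) + ((if i = 0 ∧ j = n then r else 0) : ℕ) : ℤ))
          * (x i * (1 - x j))) N]
      apply Finset.sum_congr rfl
      intro u _
      rw [← Fin.sum_univ_eq_sum_range (fun j =>
        ((((if j < n then ww d (u:ℕ) j else 0) : ℕ) + ((if (u:ℕ) = 0 ∧ j = n then r else 0) : ℕ) : ℤ))
          * (x (u:ℕ) * (1 - x j))) N]
      apply Finset.sum_congr rfl
      intro v _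
      simp only [hμ_def]
      push_cast
      ring
    have e4 : (∑ i ∈ range N, ∑ j ∈ range N,
            (((if j < n then ww d i j else 0) : ℕ) + ((if i = 0 ∧ j = n then r else 0) : ℕ) : ℤ)
              * (x i * (1 - x j)))
        = (∑ i ∈ range n, ∑ j ∈ range n, (ww d i j : ℤ) * (x i * (1 - x j)))
          + (r:ℤ) * (x 0 * (1 - x n)) := by
      have dist : ∀ i j : ℕ,
          ((((if j < n then ww d i j else 0) : ℕ) + ((if i = 0 ∧ j = n then r else 0) : ℕ) : ℤ))
            * (x i * (1 - x j))
          = (if j < n then (ww d i j : ℤ) * (x i * (1 - x j)) else 0)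
            + (if i = 0 ∧ j = n then (r:ℤ) * (x i * (1 - x j)) else 0) := by
        intro i j
        push_cast
        split_ifs <;> ring
      rw [Finset.sum_congr rfl (fun i _ => Finset.sum_congr rfl (fun j _ => dist i j))]
      rw [Finset.sum_congr rfl (fun i _ => Finset.sum_add_distrib), Finset.sum_add_distrib]
      congr 1
      · rw [hN_def, Finset.sum_range_succ]
        have last : ∑ j ∈ range (n+1), (if j < n then (ww d n j : ℤ) * (x n * (1 - x j)) else 0) = 0 := by
          apply Finset.sum_eq_zero
          intro j hj
          split_ifs with h
          · rw [ww_eq_zero d n j (by omega)]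
            push_cast
            ring
          · rfl
        rw [last, add_zero]
        apply Finset.sum_congr rfl
        intro i hi
        rw [Finset.sum_range_succ, if_neg (lt_irrefl n), add_zero]
        apply Finset.sum_congr rfl
        intro j hj
        rw [if_pos (mem_range.mp hj)]
      · have inner : ∀ i ∈ range N,
            (∑ j ∈ range N, if i = 0 ∧ j = n then (r:ℤ) * (x i * (1 - x j)) else 0)
            = if i = 0 then (r:ℤ) * (x 0 * (1 - x n)) else 0 := by
          intro i _
          by_cases h : i = 0
          · subst h
            simp only [true_and]
            have e5 : ∀ j, (if j = n then (r:ℤ) * (x 0 * (1 - x j)) else 0)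
                = if j = n then (r:ℤ) * (x 0 * (1 - x n)) else 0 := by
              intro j
              split_ifs with h2
              · rw [h2]
              · rfl
            rw [Finset.sum_congr rfl (fun j _ => e5 j),
              Finset.sum_ite_eq' (range N) n (fun _ => (r:ℤ) * (x 0 * (1 - x n)))]
            simp [hN_def]
          · simp [h]
        rw [Finset.sum_congr rfl inner,
          Finset.sum_ite_eq' (range N) 0 (fun _ => (r:ℤ) * (x 0 * (1 - x n)))]
        simp
    have hcore := cut_le d n x hx
    have hrb : (r:ℤ) * (x 0 * (1 - x n)) ≤ (r:ℤ) := by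
      have h0 := hx 0
      have h1 := hx n
      rcases h0 with h0 | h0 <;> rcases h1 with h1 | h1 <;> rw [h0, h1] <;> simp
    have hmacZ : 8 * ((macMult μ : ℕ) : ℤ)
        ≤ 2 * (F d n : ℤ) + ((d:ℤ)+1) * n + 4*((d:ℤ)*d*d) + 8*(r:ℤ) := by
      have hmac_eq : macMult μ = ∑ u ∈ X, ∑ v ∈ Xᶜ, μ u v := by
        unfold macMult
        convert hX using 3
        congr!
      rw [hmac_eq, cutZ, e3, e4]
      linarith [hcore, hrb]
    -- pass to the reals
    have hFr : (F d n : ℝ) ≤ (m : ℝ) := by exact_mod_cast hFm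
    have hrR : (r : ℝ) ≤ (d:ℝ)*(d:ℝ) := by
      have : r ≤ d * d := le_trans (le_of_lt hrA) (A_le d)
      exact_mod_cast this
    have hmacR : 8 * ((macMult μ : ℕ) : ℝ)
        ≤ 2 * (m:ℝ) + ((d:ℝ)+1) * (n:ℝ) + 4*((d:ℝ)*(d:ℝ)*(d:ℝ)) + 8*(r:ℝ) := by
      have := hmacZ
      have h2 : (8 : ℝ) * ((macMult μ : ℕ) : ℝ)
          ≤ 2 * ((F d n : ℕ):ℝ) + ((d:ℝ)+1) * (n:ℝ) + 4*((d:ℝ)*(d:ℝ)*(d:ℝ)) + 8*(r:ℝ) := by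
        exact_mod_cast this
      linarith
    have hn'bound : ((n - d : ℕ) : ℝ) * ((d:ℝ)*(d:ℝ)) ≤ 2 * (m:ℝ) := by
      have h1 : (n - d) * (d * d) ≤ 2 * m := by
        have h2 : d * d ≤ 2 * A d := by
          have := two_A d
          have h3 : d * d ≤ d * (d+1) := Nat.mul_le_mul_left d (by omega)
          omega
        calc (n - d) * (d * d) ≤ (n - d) * (2 * A d) := Nat.mul_le_mul_left _ h2
          _ = 2 * ((n - d) * A d) := by ring
          _ ≤ 2 * (F d n) := by
              have := F_ge d n hdn
              omega
          _ ≤ 2 * m := by omega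
      exact_mod_cast h1
    have hnn' : (n : ℝ) ≤ ((n - d : ℕ) : ℝ) + (d : ℝ) := by
      have : n ≤ (n - d) + d := by omega
      exact_mod_cast this
    clear hcore hrb e4 e3 cutZ hxu hx hmacZ hX
    clear hx_def x
    clear X
    set M := (m : ℝ) with hM_def
    set D := (d : ℝ) with hD_def
    have hM1 : (1:ℝ) ≤ M := by rw [hM_def]; exact_mod_cast hm
    have hMpos : (0:ℝ) < M := by linarith
    have hD1 : (1:ℝ) ≤ D := by rw [hD_def]; exact_mod_cast hd1
    have hD0 : (0:ℝ) < D := by linarith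
    set T := M ^ ((3:ℝ)/4) with hT_def
    set P := M ^ ((1:ℝ)/4) with hP_def
    have hT0 : (0:ℝ) ≤ T := Real.rpow_nonneg (le_of_lt hMpos) _
    have hP0 : (0:ℝ) ≤ P := Real.rpow_nonneg (le_of_lt hMpos) _
    have hP4 : P ^ (4:ℕ) = M := by
      rw [hP_def, ← Real.rpow_natCast (M ^ ((1:ℝ)/4)) 4, ← Real.rpow_mul (le_of_lt hMpos)]
      norm_num
    have hP3 : P ^ (3:ℕ) = T := by
      rw [hP_def, hT_def, ← Real.rpow_natCast (M ^ ((1:ℝ)/4)) 3, ← Real.rpow_mul (le_of_lt hMpos)]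
      norm_num
    have hP2 : P ^ (2:ℕ) ≤ T := by
      have h1 : P ^ (2:ℕ) = M ^ ((1:ℝ)/2) := by
        rw [hP_def, ← Real.rpow_natCast (M ^ ((1:ℝ)/4)) 2, ← Real.rpow_mul (le_of_lt hMpos)]
        norm_num
      rw [h1, hT_def]
      exact Real.rpow_le_rpow_of_exponent_le hM1 (by norm_num)
    have hDP : D ≤ P := by
      apply le_of_pow_le_pow_left₀ (n := 4) (by norm_num) hP0
      rw [hP4, hM_def, hD_def]
      have h2 : ((d*d*d*d : ℕ) : ℝ) ≤ ((m:ℕ):ℝ) := by exact_mod_cast hd4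
      push_cast at h2
      calc ((d:ℝ))^(4:ℕ) = (d:ℝ)*(d:ℝ)*(d:ℝ)*(d:ℝ) := by ring
        _ ≤ ((m:ℕ):ℝ) := h2
    have hPD : P ≤ 2 * D := by
      apply le_of_pow_le_pow_left₀ (n := 4) (by norm_num) (by linarith)
      rw [hP4, hM_def, hD_def]
      have h2 : ((m:ℕ):ℝ) ≤ (((d+1)*(d+1)*((d+1)*(d+1)) : ℕ) : ℝ) := by
        exact_mod_cast le_of_lt hub
      push_cast at h2
      have h3 : (1:ℝ) ≤ (d:ℝ) := by exact_mod_cast hd1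
      calc ((m:ℕ):ℝ) ≤ ((d:ℝ)+1)*((d:ℝ)+1)*(((d:ℝ)+1)*((d:ℝ)+1)) := h2
        _ ≤ (2*(d:ℝ))*(2*(d:ℝ))*((2*(d:ℝ))*(2*(d:ℝ))) := by
            gcongr <;> linarith
        _ = (2*(d:ℝ))^(4:ℕ) := by ring
    have hD3T : D*D*D ≤ T := by
      have h1 : D^(3:ℕ) ≤ P^(3:ℕ) := pow_le_pow_left₀ (by linarith) hDP 3
      rw [hP3] at h1
      calc D*D*D = D^(3:ℕ) := by ring
        _ ≤ T := h1
    have hD2T : D*D ≤ T := by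
      have h1 : D^(2:ℕ) ≤ P^(2:ℕ) := pow_le_pow_left₀ (by linarith) hDP 2
      calc D*D = D^(2:ℕ) := by ring
        _ ≤ P^(2:ℕ) := h1
        _ ≤ T := hP2
    have hDT : D ≤ T := by
      have h1 : D * 1 ≤ D * D := mul_le_mul_of_nonneg_left hD1 (le_of_lt hD0)
      rw [mul_one] at h1
      linarith [hD2T]
    have hMT : M ≤ 2 * T * D := by
      have h1 : P * T = M := by
        rw [hP_def, hT_def, ← Real.rpow_add hMpos]
        norm_num
      calc M = P * T := h1.symm
        _ ≤ (2*D) * T := mul_le_mul_of_nonneg_right hPD hT0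
        _ = 2 * T * D := by ring
    set n' := ((n - d : ℕ) : ℝ) with hn'_def
    have hn'0 : (0:ℝ) ≤ n' := by rw [hn'_def]; positivity
    have hn'D : n' * D ≤ 4 * T := by
      have e1 : (n' * D) * D = n' * (D*D) := by ring
      have e2 : (4 * T) * D = 2 * (2 * T * D) := by ring
      have h1 : (n' * D) * D ≤ (4 * T) * D := by
        rw [e1, e2]; linarith [hn'bound, hMT]
      exact le_of_mul_le_mul_right h1 hD0
    have hn'T : n' ≤ 4 * T := by
      have h1 : n' * 1 ≤ n' * D := mul_le_mul_of_nonneg_left hD1 hn'0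
      rw [mul_one] at h1
      linarith [hn'D]
    have hfin : (D+1) * (n:ℝ) ≤ 10 * T := by
      have h1 : (D+1) * (n:ℝ) ≤ (D+1) * (n' + D) :=
        mul_le_mul_of_nonneg_left hnn' (by linarith)
      have e : (D+1) * (n' + D) = n' * D + D * D + n' + D := by ring
      rw [e] at h1
      linarith [hn'D, hD2T, hn'T, hDT]
    have hrT : (r:ℝ) ≤ T := by linarith [hrR, hD2T]
    have hmac0 : (0:ℝ) ≤ ((macMult μ : ℕ) : ℝ) := by positivity
    linarith [hmacR, hfin, hD3T, hrT, hFr, hT0]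


end PaperStmt
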